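/- Let p be a probability mass function on the positive integers and let X^{(1)}, ..., X^{(n)} be an i.i.d. sample from p. For each i, let m^{(i)} = #{k ≤ n : X^{(k)} = X^{(i)}} be the number of occurrences of the symbol X^{(i)} in the sample, and define the harmonic entropy estimator Ĥ(X_n) = (1/n) ∑_{i=1}^{n} [J(n−1) − J(m^{(i)} − 1)]. If the Shannon entropy H(X) = −∑_j p_j log p_j is finite, then E[Ĥ(X_n)] − H(X) = −∑_{k=n}^{∞} (1/k) E[(1 − p(X))^k] = −∑_{k=n}^{∞} (1/k) ∑_{j} p_j (1−p_j)^k. -/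

import Mathlib

/-- `J m` is the `m`-th harmonic number `∑_{k=1}^m 1/k`, with `J 0 = 0`. -/
noncomputable def J (m : ℕ) : ℝ := ∑ k ∈ Finset.range m, (1 : ℝ) / (k + 1)

/-- `mcount x i` is the number of occurrences `m⁽ⁱ⁾` of the symbol `x i` in the sample `x`. -/
def mcount {n : ℕ} (x : Fin n → ℕ+) (i : Fin n) : ℕ :=
  (Finset.univ.filter fun k => x k = x i).card

/-- The harmonic entropy estimator
`Ĥ(x) = (1/n) ∑_{i=1}^n [J(n−1) − J(m⁽ⁱ⁾ − 1)]`. -/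
noncomputable def Hhat {n : ℕ} (x : Fin n → ℕ+) : ℝ :=
  ((n : ℝ))⁻¹ * ∑ i, (J (n - 1) - J (mcount x i - 1))

/-- The probability that an i.i.d. sample of size `n` from the pmf `p` equals `x`. -/
noncomputable def Pn {n : ℕ} (p : ℕ+ → ℝ) (x : Fin n → ℕ+) : ℝ := ∏ i, p (x i)

/-- The expectation `E[Ĥ(X_n)]` of the harmonic entropy estimator over an i.i.d. sample
of size `n` from `p`. -/
noncomputable def EHhat (p : ℕ+ → ℝ) (n : ℕ) : ℝ := ∑' x : Fin n → ℕ+, Pn p x * Hhat x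

/-- The Shannon entropy `H(X) = −∑_j p_j log p_j` of the pmf `p`. -/
noncomputable def Hent (p : ℕ+ → ℝ) : ℝ := -∑' j : ℕ+, p j * Real.log (p j)

/-!
By symmetry `E[Ĥ(X_n)] = E[J(n-1) - J(m⁽¹⁾-1)]`, and given `X⁽¹⁾ = j` the count `m⁽¹⁾ - 1` is
binomial `Bin(n-1, p_j)`. Pascal's rule gives `E[J N - J B] = ∑_{k=1}^N (1-q)^k/k` for
`B ~ Bin(N, q)`, a partial sum of `-log q = ∑_{k≥1} (1-q)^k/k`; hence the bias is minus the
`p`-average of the tails of these series, and exchanging the two sums of nonnegative terms gives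
the formula. Expectations over the sample are computed in `ℝ≥0∞`, where no summability is needed.
-/

open Finset
open scoped ENNReal

section BinomialSum

variable {R : Type*} [CommSemiring R]

/-- `E[g B]` for `B ~ Bin(N, q)` when `r = 1 - q`. The second weight `r` is kept free so that the
same sum makes sense in `ℝ≥0∞`. -/
def binomialSum (q r : R) (N : ℕ) (g : ℕ → R) : R :=
  ∑ m ∈ range (N + 1), (N.choose m : R) * q ^ m * r ^ (N - m) * g m

theorem binomialSum_zero (q r : R) (g : ℕ → R) : binomialSum q r 0 g = g 0 := by
  simp [binomialSum]

/-- Pascal's rule: `B_{N+1} = B_N + ξ` with an independent Bernoulli variable `ξ`. -/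
theorem binomialSum_succ (q r : R) (N : ℕ) (g : ℕ → R) :
    binomialSum q r (N + 1) g
      = r * binomialSum q r N g + q * binomialSum q r N (fun m => g (m + 1)) := by
  have hr : r * binomialSum q r N g
      = ∑ m ∈ range N, (N.choose (m + 1) : R) * q ^ (m + 1) * r ^ (N - m) * g (m + 1)
        + r ^ (N + 1) * g 0 := by
    rw [binomialSum, mul_sum, sum_range_succ']
    congr 1
    · refine sum_congr rfl fun m hm => ?_
      rw [show N - m = N - (m + 1) + 1 by have := mem_range.1 hm; omega]
      ring
    · simp only [Nat.choose_zero_right, Nat.cast_one, pow_zero, Nat.sub_zero]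
      ring
  have hq : q * binomialSum q r N (fun m => g (m + 1))
      = ∑ m ∈ range (N + 1), (N.choose m : R) * q ^ (m + 1) * r ^ (N - m) * g (m + 1) := by
    rw [binomialSum, mul_sum]
    exact sum_congr rfl fun m _ => by ring
  rw [hr, hq, binomialSum, sum_range_succ']
  simp only [Nat.choose_succ_succ, Nat.cast_add, Nat.succ_sub_succ, add_mul, sum_add_distrib,
    Nat.choose_zero_right, Nat.cast_one, pow_zero, Nat.sub_zero, one_mul]
  rw [sum_range_succ (fun m => (N.choose (m + 1) : R) * _ * _ * _)]
  simp only [Nat.choose_succ_self, Nat.cast_zero, zero_mul, add_zero]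
  ring

theorem binomialSum_add (q r : R) (N : ℕ) (g h : ℕ → R) :
    binomialSum q r N (fun m => g m + h m) = binomialSum q r N g + binomialSum q r N h := by
  simp only [binomialSum, mul_add, sum_add_distrib]

theorem binomialSum_const (q r c : R) (N : ℕ) :
    binomialSum q r N (fun _ => c) = (q + r) ^ N * c := by
  induction N with
  | zero => simp [binomialSum_zero]
  | succ N ih => rw [binomialSum_succ, ih, pow_succ]; ring

end BinomialSum

theorem binomialSum_sub {R : Type*} [CommRing R] (q r : R) (N : ℕ) (g h : ℕ → R) :
    binomialSum q r N (fun m => g m - h m) = binomialSum q r N g - binomialSum q r N h := by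
  simp only [binomialSum, mul_sub, sum_sub_distrib]

theorem add_one_mul_binomialSum_inv_succ {K : Type*} [Field K] [CharZero K] (q r : K) (N : ℕ) :
    (N + 1) * (q * binomialSum q r N (fun m => 1 / (m + 1)))
      = (q + r) ^ (N + 1) - r ^ (N + 1) := by
  rw [add_pow, sum_range_succ', binomialSum, mul_sum, mul_sum]
  simp only [pow_zero, Nat.sub_zero, Nat.choose_zero_right, Nat.cast_one, one_mul, mul_one,
    add_sub_cancel_right, Nat.succ_sub_succ]
  refine sum_congr rfl fun m _ => ?_
  have h := congrArg (Nat.cast : ℕ → K) (Nat.add_one_mul_choose_eq N m)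
  push_cast at h
  field_simp
  linear_combination q * q ^ m * r ^ (N - m) * h

noncomputable def negLogPartialSum (q : ℝ) (N : ℕ) : ℝ :=
  ∑ k ∈ range N, (1 - q) ^ (k + 1) / (k + 1)

theorem negLogPartialSum_nonneg {q : ℝ} (hq : q ≤ 1) (N : ℕ) : 0 ≤ negLogPartialSum q N :=
  sum_nonneg fun _ _ => div_nonneg (pow_nonneg (sub_nonneg.2 hq) _) (by positivity)

theorem negLogPartialSum_le_J {q : ℝ} (hq0 : 0 ≤ q) (hq1 : q ≤ 1) (N : ℕ) :
    negLogPartialSum q N ≤ J N :=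
  sum_le_sum fun _ _ => div_le_div_of_nonneg_right
    (pow_le_one₀ (sub_nonneg.2 hq1) (by linarith)) (by positivity)

theorem J_succ (m : ℕ) : J (m + 1) = J m + 1 / (m + 1) := sum_range_succ _ _

theorem J_sub_nonneg {m N : ℕ} (h : m ≤ N) : 0 ≤ J N - J m :=
  sub_nonneg.2 <| sum_le_sum_of_subset_of_nonneg (range_subset_range.2 h) fun _ _ _ => by
    positivity

theorem binomialSum_J_sub (q : ℝ) (N : ℕ) :
    binomialSum q (1 - q) N (fun m => J N - J m) = negLogPartialSum q N := by
  induction N with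
  | zero => simp [binomialSum_zero, negLogPartialSum]
  | succ N ih =>
    have hmean : q * binomialSum q (1 - q) N (fun m => 1 / (m + 1))
        = (1 - (1 - q) ^ (N + 1)) / (N + 1) := by
      rw [eq_div_iff (by positivity), mul_comm, add_one_mul_binomialSum_inv_succ,
        add_sub_cancel, one_pow]
    have h₁ : (fun m : ℕ => J (N + 1) - J m) = fun m => (J N - J m) + 1 / (N + 1) := by
      funext m; rw [J_succ]; ring
    have h₂ : (fun m : ℕ => J (N + 1) - J (m + 1))
        = fun m => (J N - J m) + 1 / (N + 1) - 1 / (m + 1) := by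
      funext m; rw [J_succ, J_succ]; ring
    calc binomialSum q (1 - q) (N + 1) (fun m => J (N + 1) - J m)
        = binomialSum q (1 - q) N (fun m => J N - J m) + 1 / (N + 1)
          - q * binomialSum q (1 - q) N (fun m => 1 / (m + 1)) := by
          rw [binomialSum_succ, h₁, h₂]
          simp only [binomialSum_sub, binomialSum_add, binomialSum_const, add_sub_cancel,
            one_pow, one_mul]
          ring
      _ = negLogPartialSum q (N + 1) := by
          rw [ih, hmean, negLogPartialSum, negLogPartialSum, sum_range_succ]
          ring

/-- The weight `q` makes the case `q = 0`, where the series diverges, trivial. -/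
theorem hasSum_mul_tail_log {q : ℝ} (hq0 : 0 ≤ q) (hq1 : q ≤ 1) (N : ℕ) :
    HasSum (fun i : ℕ => 1 / ((N + 1 : ℕ) + i : ℝ) * (q * (1 - q) ^ (N + 1 + i)))
      (-(q * (negLogPartialSum q N + Real.log q))) := by
  rcases hq0.eq_or_lt with rfl | hq0
  · simp
  have hlog := Real.hasSum_pow_div_log_of_abs_lt_one (x := 1 - q)
    (abs_lt.2 ⟨by linarith, by linarith⟩)
  rw [sub_sub_cancel] at hlog
  rw [show -(q * (negLogPartialSum q N + Real.log q))
      = q * (-Real.log q - negLogPartialSum q N) by ring]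
  refine (((hasSum_nat_add_iff' N).2 hlog).mul_left q).congr_fun fun i => ?_
  rw [show N + 1 + i = i + N + 1 by ring]
  push_cast
  ring

theorem tsum_comm_of_nonneg {β γ : Type*} {f : β → γ → ℝ} (hf : ∀ b c, 0 ≤ f b c)
    (hrow : ∀ b, Summable (f b)) (htot : Summable fun b => ∑' c, f b c) :
    ∑' b, ∑' c, f b c = ∑' c, ∑' b, f b c := by
  have h : Summable (Function.uncurry f) :=
    (summable_prod_of_nonneg fun _ => hf _ _).2 ⟨hrow, htot⟩
  exact (h.tsum_comm' hrow fun c => h.prod_symm.prod_factor c).symm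

theorem card_filter_cons_eq {α : Type*} [DecidableEq α] {N : ℕ} (a j : α) (y : Fin N → α) :
    #{k | (Fin.cons a y : Fin (N + 1) → α) k = j} = #{k | y k = j} + if a = j then 1 else 0 := by
  simp only [card_filter, Fin.sum_univ_succ, Fin.cons_zero, Fin.cons_succ]
  ring

/-- The number of coordinates equal to `j` in an i.i.d. sample is binomial. -/
theorem tsum_prod_mul_card_filter_eq {α : Type*} [DecidableEq α] (P : α → ℝ≥0∞) (j : α)
    (N : ℕ) (g : ℕ → ℝ≥0∞) :
    ∑' y : Fin N → α, (∏ k, P (y k)) * g #{k | y k = j}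
      = binomialSum (P j) (∑' a, if a = j then 0 else P a) N g := by
  induction N generalizing g with
  | zero => simp [binomialSum_zero]
  | succ N ih =>
    have ih_succ := ih fun m => g (m + 1)
    rw [← (Fin.consEquiv fun _ => α).tsum_eq, ENNReal.tsum_prod', ENNReal.tsum_eq_add_tsum_ite j]
    simp only [Fin.consEquiv_apply, Fin.prod_univ_succ, Fin.cons_zero, Fin.cons_succ,
      card_filter_cons_eq, mul_assoc, ENNReal.tsum_mul_left, if_true, ih_succ]
    rw [binomialSum_succ, add_comm, ← ENNReal.tsum_mul_right]
    congr 1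
    refine tsum_congr fun a => ?_
    split_ifs <;> simp [ih]

theorem mcount_comp_perm {n : ℕ} (x : Fin n → ℕ+) (σ : Equiv.Perm (Fin n)) (i : Fin n) :
    mcount (x ∘ σ) i = mcount x (σ i) := by
  simp only [mcount, card_filter, Function.comp_apply]
  exact Equiv.sum_comp σ fun k => if x k = x (σ i) then 1 else 0

theorem mcount_cons_zero {N : ℕ} (a : ℕ+) (y : Fin N → ℕ+) :
    mcount (Fin.cons a y : Fin (N + 1) → ℕ+) 0 = #{k | y k = a} + 1 := by
  simpa [mcount] using card_filter_cons_eq a a y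

theorem mcount_le {n : ℕ} (x : Fin n → ℕ+) (i : Fin n) : mcount x i ≤ n :=
  (card_filter_le _ _).trans_eq (card_fin n)

theorem tsum_prod_mul_mcount_eq (P : ℕ+ → ℝ≥0∞) (N : ℕ) (i : Fin (N + 1)) (g : ℕ → ℝ≥0∞) :
    ∑' x : Fin (N + 1) → ℕ+, (∏ k, P (x k)) * g (mcount x i)
      = ∑' a, P a * binomialSum (P a) (∑' b, if b = a then 0 else P b) N (fun m => g (m + 1)) := by
  have hsymm : ∑' x : Fin (N + 1) → ℕ+, (∏ k, P (x k)) * g (mcount x i)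
      = ∑' x : Fin (N + 1) → ℕ+, (∏ k, P (x k)) * g (mcount x 0) := by
    rw [← ((Equiv.swap 0 i).arrowCongr (Equiv.refl ℕ+)).tsum_eq]
    refine tsum_congr fun x => ?_
    have hx : (Equiv.swap 0 i).arrowCongr (Equiv.refl ℕ+) x = x ∘ Equiv.swap 0 i := by
      ext k; simp
    rw [hx, mcount_comp_perm, Equiv.swap_apply_right]
    exact congrArg (· * _) (Equiv.prod_comp (Equiv.swap 0 i) fun k => P (x k))
  rw [hsymm, ← (Fin.consEquiv fun _ => ℕ+).tsum_eq, ENNReal.tsum_prod']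
  simp only [Fin.consEquiv, Equiv.coe_fn_mk, Fin.prod_univ_succ, Fin.cons_zero, Fin.cons_succ,
    mcount_cons_zero, mul_assoc, ENNReal.tsum_mul_left]
  exact tsum_congr fun a =>
    congrArg (P a * ·) (tsum_prod_mul_card_filter_eq P a N fun m => g (m + 1))

theorem tsum_eq_toReal_tsum_ofReal {α : Type*} {f : α → ℝ} (hf : ∀ a, 0 ≤ f a) :
    ∑' a, f a = (∑' a, ENNReal.ofReal (f a)).toReal := by
  rw [ENNReal.tsum_toReal_eq fun _ => ENNReal.ofReal_ne_top]
  exact tsum_congr fun a => (ENNReal.toReal_ofReal (hf a)).symm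

theorem ofReal_binomialSum {q r : ℝ} (hq : 0 ≤ q) (hr : 0 ≤ r) (N : ℕ) {g : ℕ → ℝ}
    (hg : ∀ m ≤ N, 0 ≤ g m) :
    ENNReal.ofReal (binomialSum q r N g)
      = binomialSum (ENNReal.ofReal q) (ENNReal.ofReal r) N fun m => ENNReal.ofReal (g m) := by
  have hw : ∀ m, 0 ≤ (N.choose m : ℝ) * q ^ m * r ^ (N - m) := fun m => by positivity
  have hg' : ∀ m ∈ range (N + 1), 0 ≤ g m := fun m hm =>
    hg m (Nat.lt_succ_iff.1 (mem_range.1 hm))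
  rw [binomialSum, ENNReal.ofReal_sum_of_nonneg fun m hm => mul_nonneg (hw m) (hg' m hm)]
  refine sum_congr rfl fun m hm => ?_
  rw [ENNReal.ofReal_mul (hw m), ENNReal.ofReal_mul (by positivity), ENNReal.ofReal_mul
    (by positivity), ENNReal.ofReal_natCast, ENNReal.ofReal_pow hq, ENNReal.ofReal_pow hr]

theorem tsum_ite_ofReal_eq_ofReal_one_sub {α : Type*} [DecidableEq α] {p : α → ℝ}
    (hp0 : ∀ j, 0 ≤ p j) (hp : HasSum p 1) (a : α) :
    ∑' b, (if b = a then 0 else ENNReal.ofReal (p b)) = ENNReal.ofReal (1 - p a) := by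
  have htotal := ENNReal.tsum_eq_add_tsum_ite a (f := fun b => ENNReal.ofReal (p b))
  rw [← ENNReal.ofReal_tsum_of_nonneg hp0 hp.summable, hp.tsum_eq, ENNReal.ofReal_one,
    add_comm] at htotal
  rw [ENNReal.ofReal_sub 1 (hp0 a), ENNReal.ofReal_one]
  convert ENNReal.eq_sub_of_add_eq ENNReal.ofReal_ne_top htotal.symm

theorem Hhat_nonneg {n : ℕ} (x : Fin n → ℕ+) : 0 ≤ Hhat x :=
  mul_nonneg (by positivity) <| sum_nonneg fun i _ => J_sub_nonneg (by
    have := mcount_le x i; omega)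

theorem ofReal_Pn_mul_Hhat (p : ℕ+ → ℝ) (hp0 : ∀ j, 0 ≤ p j) {N : ℕ} (x : Fin (N + 1) → ℕ+) :
    ENNReal.ofReal (Pn p x * Hhat x) = ((N + 1 : ℕ) : ℝ≥0∞)⁻¹ *
      ∑ i, (∏ k, ENNReal.ofReal (p (x k))) * ENNReal.ofReal (J N - J (mcount x i - 1)) := by
  have hJ : ∀ i, 0 ≤ J N - J (mcount x i - 1) := fun i => J_sub_nonneg (by
    have := mcount_le x i; omega)
  rw [Pn, Hhat, Nat.add_sub_cancel, ENNReal.ofReal_mul (prod_nonneg fun k _ => hp0 _),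
    ENNReal.ofReal_mul (by positivity), ENNReal.ofReal_inv_of_pos (by positivity),
    ENNReal.ofReal_natCast, ENNReal.ofReal_sum_of_nonneg fun i _ => hJ i,
    ENNReal.ofReal_prod_of_nonneg fun k _ => hp0 _]
  simp only [mul_sum]
  exact sum_congr rfl fun i _ => mul_left_comm _ _ _

theorem EHhat_succ_eq (p : ℕ+ → ℝ) (hp0 : ∀ j, 0 ≤ p j) (hp : HasSum p 1) (N : ℕ) :
    EHhat p (N + 1) = ∑' j, p j * negLogPartialSum (p j) N := by
  have hp1 : ∀ j, p j ≤ 1 := fun j => le_hasSum hp j fun k _ => hp0 k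
  have hJ : ∀ m ≤ N, 0 ≤ J N - J m := fun m => J_sub_nonneg
  have hsample : ∑' x : Fin (N + 1) → ℕ+, ENNReal.ofReal (Pn p x * Hhat x)
      = ∑' j, ENNReal.ofReal (p j * negLogPartialSum (p j) N) := by
    simp_rw [ofReal_Pn_mul_Hhat p hp0]
    rw [ENNReal.tsum_mul_left, Summable.tsum_finsetSum fun _ _ => ENNReal.summable]
    simp_rw [tsum_prod_mul_mcount_eq (fun j => ENNReal.ofReal (p j)) N _
      (fun m => ENNReal.ofReal (J N - J (m - 1))), Nat.add_sub_cancel]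
    rw [sum_const, card_univ, Fintype.card_fin, nsmul_eq_mul, ← mul_assoc,
      ENNReal.inv_mul_cancel (by simp) (by simp), one_mul]
    refine tsum_congr fun j => ?_
    rw [← binomialSum_J_sub, ENNReal.ofReal_mul (hp0 j),
      ofReal_binomialSum (hp0 j) (sub_nonneg.2 (hp1 j)) N hJ,
      tsum_ite_ofReal_eq_ofReal_one_sub hp0 hp]
  have hPn : ∀ x : Fin (N + 1) → ℕ+, 0 ≤ Pn p x := fun x => prod_nonneg fun k _ => hp0 _
  rw [EHhat, tsum_eq_toReal_tsum_ofReal fun x => mul_nonneg (hPn x) (Hhat_nonneg x), hsample,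
    ← tsum_eq_toReal_tsum_ofReal fun j => mul_nonneg (hp0 j) (negLogPartialSum_nonneg (hp1 j) N)]

/-- If the entropy of `p` is finite, then the bias of the harmonic
entropy estimator is exactly
`E[Ĥ(X_n)] − H(X) = −∑_{k=n}^∞ (1/k) ∑_j p_j (1−p_j)^k`. -/
theorem harmonic_estimator_bias_formula (p : ℕ+ → ℝ)
    (hp0 : ∀ j, 0 ≤ p j) (hsum : ∑' j, p j = 1)
    (hH : Summable fun j : ℕ+ => p j * Real.log (p j))
    (n : ℕ) (hn : 1 ≤ n) :
    EHhat p n - Hent p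
      = -∑' i : ℕ, (1 / (n + i : ℝ)) * ∑' j : ℕ+, p j * (1 - p j) ^ (n + i) := by
  obtain ⟨N, rfl⟩ : ∃ N, n = N + 1 := ⟨n - 1, by omega⟩
  have hp : HasSum p 1 := hsum ▸ (Summable.hasSum <| by
    by_contra h
    simp [tsum_eq_zero_of_not_summable h] at hsum)
  have hp1 : ∀ j, p j ≤ 1 := fun j => le_hasSum hp j fun k _ => hp0 k
  have htail := fun j => hasSum_mul_tail_log (hp0 j) (hp1 j) N
  have hS : Summable fun j => p j * negLogPartialSum (p j) N :=
    (hp.summable.mul_right (J N)).of_nonneg_of_le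
      (fun j => mul_nonneg (hp0 j) (negLogPartialSum_nonneg (hp1 j) N))
      (fun j => mul_le_mul_of_nonneg_left (negLogPartialSum_le_J (hp0 j) (hp1 j) N) (hp0 j))
  rw [EHhat_succ_eq p hp0 hp N, Hent, sub_neg_eq_add, ← hS.tsum_add hH]
  calc ∑' j, (p j * negLogPartialSum (p j) N + p j * Real.log (p j))
      = -∑' j, ∑' i : ℕ, 1 / ((N + 1 : ℕ) + i : ℝ) * (p j * (1 - p j) ^ (N + 1 + i)) := by
        rw [← tsum_neg]
        exact tsum_congr fun j => by rw [(htail j).tsum_eq, neg_neg, mul_add]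
    _ = -∑' i : ℕ, ∑' j, 1 / ((N + 1 : ℕ) + i : ℝ) * (p j * (1 - p j) ^ (N + 1 + i)) := by
        refine congrArg Neg.neg (tsum_comm_of_nonneg (fun j i => ?_) (fun j => (htail j).summable)
          ((hS.add hH).neg.congr fun j => by rw [(htail j).tsum_eq, mul_add]))
        exact mul_nonneg (by positivity) (mul_nonneg (hp0 j) (pow_nonneg (sub_nonneg.2 (hp1 j)) _))
    _ = _ := by simp_rw [tsum_mul_left]
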